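/- arXiv:2410.11465 — 3 statements merged into one kernel-verified Lean document; each statement's English description precedes it below -/
import Mathlib

section
/- Let A be an N×N real matrix with characteristic polynomial P, and let P₁ and P₂ be real polynomials such that for every real μ one has P(iμ) = P₁(μ) + i·P₂(μ), where P is evaluated in ℂ via the canonical embedding (P₁ collects the real parts and P₂ the imaginary parts of P(iμ)). If the complexification of A has an eigenvalue z ∈ ℂ with Re z = 0, then det(A) · Res(P₁, P₂) = 0, where Res denotes the resultant of the two polynomials. -/
/-!
A purely imaginary eigenvalue `iμ` makes `μ` a common real root of `P₁` and `P₂`. Then the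
vector `(μ ^ (n - 1 - j))_j` lies in the kernel of the Sylvester matrix, so the resultant
vanishes, unless the matrix is empty, i.e. `P₁` and `P₂` are constants. In that case both
constants are `0`, so `P(0) = 0` and `det A = 0`.
-/

open Polynomial

/-- The Sylvester matrix of two real polynomials `p` and `q`, of size
`(p.natDegree + q.natDegree) × (p.natDegree + q.natDegree)`.  The first
`q.natDegree` rows contain the shifted coefficients of `p`, the remaining
`p.natDegree` rows the shifted coefficients of `q`. -/
noncomputable def sylvesterMatrix (p q : Polynomial ℝ) :
    Matrix (Fin (q.natDegree + p.natDegree)) (Fin (q.natDegree + p.natDegree)) ℝ :=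
  Matrix.of fun i j =>
    if (i : ℕ) < q.natDegree then
      -- row i of the `p`-block: entries p_m, p_{m-1}, …, p_0 starting at column i
      if (i : ℕ) ≤ (j : ℕ) ∧ (j : ℕ) ≤ (i : ℕ) + p.natDegree then
        p.coeff (p.natDegree - ((j : ℕ) - (i : ℕ)))
      else 0
    else
      -- row (q.natDegree + i') of the `q`-block, with i' = i - q.natDegree
      if (i : ℕ) - q.natDegree ≤ (j : ℕ) ∧ (j : ℕ) ≤ ((i : ℕ) - q.natDegree) + q.natDegree then
        q.coeff (q.natDegree - ((j : ℕ) - ((i : ℕ) - q.natDegree)))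
      else 0

/-- The resultant of two real polynomials: the determinant of their Sylvester matrix. -/
noncomputable def resultant (p q : Polynomial ℝ) : ℝ :=
  (sylvesterMatrix p q).det

open Finset Matrix

-- A row of the Sylvester block of `r`, applied to the vector `(x ^ (c + deg r - 1 - j))_j`.
theorem sum_window_coeff_mul_pow {R : Type*} [CommSemiring R] (r : R[X]) (x : R) {c i : ℕ}
    (hi : i < c) :
    ∑ j ∈ range (c + r.natDegree),
      (if i ≤ j ∧ j ≤ i + r.natDegree then r.coeff (r.natDegree - (j - i)) else 0) *
        x ^ (c + r.natDegree - 1 - j) = x ^ (c - 1 - i) * r.eval x := by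
  set d := r.natDegree
  have hwindow :
      (range (c + d)).filter (fun j => i ≤ j ∧ j ≤ i + d) = Ico i (i + (d + 1)) := by
    ext j; simp only [mem_filter, mem_range, mem_Ico]; omega
  simp only [ite_mul, zero_mul]
  rw [← sum_filter, hwindow, sum_Ico_eq_sum_range, Nat.add_sub_cancel_left,
    ← sum_range_reflect, eval_eq_sum_range, mul_sum]
  refine sum_congr rfl fun k hk => ?_
  rw [mem_range] at hk
  rw [show d - (i + (d + 1 - 1 - k) - i) = k by omega,
    show c + d - 1 - (i + (d + 1 - 1 - k)) = c - 1 - i + k by omega, pow_add]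
  ring

theorem sylvesterMatrix_mulVec_pow (p q : ℝ[X]) (x : ℝ) :
    sylvesterMatrix p q *ᵥ (fun j => x ^ (q.natDegree + p.natDegree - 1 - j)) = fun i : Fin _ =>
      if (i : ℕ) < q.natDegree then x ^ (q.natDegree - 1 - (i : ℕ)) * p.eval x
      else x ^ (p.natDegree - 1 - ((i : ℕ) - q.natDegree)) * q.eval x := by
  funext i
  simp only [mulVec, dotProduct, sylvesterMatrix, of_apply]
  split_ifs with hi
  · rw [← sum_window_coeff_mul_pow p x hi, sum_range]
  · rw [← sum_window_coeff_mul_pow q x (by omega : (i : ℕ) - q.natDegree < p.natDegree),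
      add_comm p.natDegree q.natDegree, sum_range]

theorem resultant_eq_zero_of_common_root {p q : ℝ[X]} {x : ℝ} (hp : p.eval x = 0)
    (hq : q.eval x = 0) (hpos : 0 < q.natDegree + p.natDegree) : _root_.resultant p q = 0 := by
  rw [_root_.resultant, ← exists_mulVec_eq_zero_iff]
  refine ⟨fun j => x ^ (q.natDegree + p.natDegree - 1 - j), fun h => ?_, ?_⟩
  · simpa using congrFun h ⟨q.natDegree + p.natDegree - 1, by omega⟩
  · ext i
    simp [sylvesterMatrix_mulVec_pow, hp, hq]

theorem eval_eq_zero_of_isRoot_I_mul {P P₁ P₂ : ℝ[X]}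
    (hP : ∀ μ : ℝ,
      (P.map (algebraMap ℝ ℂ)).eval (Complex.I * μ) = P₁.eval μ + Complex.I * P₂.eval μ)
    {μ : ℝ} (hμ : (P.map (algebraMap ℝ ℂ)).IsRoot (Complex.I * μ)) :
    P₁.eval μ = 0 ∧ P₂.eval μ = 0 := by
  have h := hP μ
  rw [hμ.eq_zero, Complex.ext_iff] at h
  simpa [eq_comm] using h

theorem eq_zero_of_natDegree_eq_zero_of_isRoot {R : Type*} [Semiring R] {p : R[X]} {x : R}
    (hdeg : p.natDegree = 0) (hx : p.IsRoot x) : p = 0 := by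
  rw [eq_C_of_natDegree_eq_zero hdeg] at hx ⊢
  simpa using hx

theorem det_mul_resultant_eq_zero_of_imaginary_eigenvalue_general
    (N : ℕ) (A : Matrix (Fin N) (Fin N) ℝ) (P₁ P₂ : Polynomial ℝ)
    (hP : ∀ μ : ℝ, ((Matrix.charpoly A).map (algebraMap ℝ ℂ)).eval (Complex.I * (μ : ℂ))
      = (↑(P₁.eval μ) : ℂ) + Complex.I * (↑(P₂.eval μ) : ℂ))
    (h : ∃ z : ℂ, ((Matrix.charpoly A).map (algebraMap ℝ ℂ)).IsRoot z ∧ z.re = 0) :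
    A.det * _root_.resultant P₁ P₂ = 0 := by
  obtain ⟨z, hz, hre⟩ := h
  have hz_eq : z = Complex.I * z.im := by apply Complex.ext <;> simp [hre]
  rw [hz_eq] at hz
  obtain ⟨h₁, h₂⟩ := eval_eq_zero_of_isRoot_I_mul hP hz
  rcases Nat.eq_zero_or_pos (P₂.natDegree + P₁.natDegree) with hdeg | hdeg
  · have hP₁ : P₁ = 0 := eq_zero_of_natDegree_eq_zero_of_isRoot (by omega) h₁
    have hP₂ : P₂ = 0 := eq_zero_of_natDegree_eq_zero_of_isRoot (by omega) h₂
    have hA : A.charpoly.coeff 0 = 0 := by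
      simpa [hP₁, hP₂, ← coeff_zero_eq_aeval_zero'] using hP 0
    rw [det_eq_sign_charpoly_coeff, hA, mul_zero, zero_mul]
  · rw [resultant_eq_zero_of_common_root h₁ h₂ hdeg, mul_zero]

/-- Let `A` be an `N×N` real matrix (`N ≥ 1`) with characteristic polynomial `P`, and
let `P₁, P₂ ∈ ℝ[X]` satisfy `P(iμ) = P₁(μ) + i·P₂(μ)` for all real `μ`.  If the
complexification of `A` has an eigenvalue `z` with `Re z = 0`, then
`det A · Res(P₁, P₂) = 0`. -/
theorem det_mul_resultant_eq_zero_of_imaginary_eigenvalue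
    (N : ℕ) (hN : 1 ≤ N) (A : Matrix (Fin N) (Fin N) ℝ) (P₁ P₂ : Polynomial ℝ)
    (hP : ∀ μ : ℝ, ((Matrix.charpoly A).map (algebraMap ℝ ℂ)).eval (Complex.I * (μ : ℂ))
      = (↑(P₁.eval μ) : ℂ) + Complex.I * (↑(P₂.eval μ) : ℂ))
    (h : ∃ z : ℂ, ((Matrix.charpoly A).map (algebraMap ℝ ℂ)).IsRoot z ∧ z.re = 0) :
    A.det * _root_.resultant P₁ P₂ = 0 :=
  det_mul_resultant_eq_zero_of_imaginary_eigenvalue_general N A P₁ P₂ hP h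
end

section
/- Let K be a field of characteristic zero. Let f, h, c be formal power series in one variable over K such that the constant coefficient of f is 0, the coefficient of degree 1 of f is 0 (i.e., f has order at least 2), and the constant coefficient of h is nonzero. If f · c′ = h · c, where c′ denotes the formal derivative of c, then c = 0. -/
open PowerSeries

/-!
Every power of `X` divides `c`. If `X ^ n ∣ c` then `X ^ (n - 1) ∣ c′`, so `X ^ 2 ∣ f` gives
`X ^ (n + 1) ∣ f * c′ = h * c`; as `h(0) ≠ 0`, `h` is a unit and `X ^ (n + 1) ∣ c`.
-/

namespace PowerSeries

variable {R : Type*}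

theorem eq_zero_of_forall_X_pow_dvd [Semiring R] {φ : R⟦X⟧} (h : ∀ n, (X : R⟦X⟧) ^ n ∣ φ) :
    φ = 0 :=
  ext fun n => X_pow_dvd_iff.mp (h (n + 1)) n n.lt_succ_self

variable [CommSemiring R]

theorem X_pow_sub_one_dvd_derivative {n : ℕ} {φ : R⟦X⟧} (h : (X : R⟦X⟧) ^ n ∣ φ) :
    (X : R⟦X⟧) ^ (n - 1) ∣ d⁄dX R φ := by
  rw [X_pow_dvd_iff] at h ⊢
  intro m hm
  rw [coeff_derivative, h (m + 1) (by omega), zero_mul]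

theorem X_pow_succ_dvd_mul_derivative {n : ℕ} {f φ : R⟦X⟧} (hf : (X : R⟦X⟧) ^ 2 ∣ f)
    (hφ : (X : R⟦X⟧) ^ n ∣ φ) : (X : R⟦X⟧) ^ (n + 1) ∣ f * d⁄dX R φ :=
  calc (X : R⟦X⟧) ^ (n + 1) ∣ X ^ (2 + (n - 1)) := pow_dvd_pow _ (by omega)
    _ = X ^ 2 * X ^ (n - 1) := pow_add _ _ _
    _ ∣ f * d⁄dX R φ := mul_dvd_mul hf (X_pow_sub_one_dvd_derivative hφ)

theorem eq_zero_of_mul_derivative_eq_unit_mul {f h φ : R⟦X⟧} (hf : (X : R⟦X⟧) ^ 2 ∣ f)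
    (hh : IsUnit h) (heq : f * d⁄dX R φ = h * φ) : φ = 0 := by
  refine eq_zero_of_forall_X_pow_dvd fun n => ?_
  induction n with
  | zero => exact one_dvd φ
  | succ n ih => exact hh.dvd_mul_left.mp (heq ▸ X_pow_succ_dvd_mul_derivative hf ih)

end PowerSeries

theorem eq_zero_of_irregular_singular_ODE_general {K : Type*} [Field K]
    (f h c : PowerSeries K)
    (hf0 : PowerSeries.coeff 0 f = 0) (hf1 : PowerSeries.coeff 1 f = 0)
    (hh : PowerSeries.constantCoeff h ≠ 0)
    (heq : f * (PowerSeries.derivative K c) = h * c) :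
    c = 0 := by
  have hf : (X : K⟦X⟧) ^ 2 ∣ f := X_pow_dvd_iff.mpr fun
    | 0, _ => hf0
    | 1, _ => hf1
  exact eq_zero_of_mul_derivative_eq_unit_mul hf (isUnit_iff_constantCoeff.mpr hh.isUnit) heq

/-- Irregular singularity lemma: let `K` be a field of characteristic zero and
`f, h, c ∈ K⟦X⟧` with `ord f ≥ 2` (the coefficients of degree `0` and `1` of `f`
vanish) and `h(0) ≠ 0`.  If `f · c′ = h · c`, then `c = 0`. -/
theorem eq_zero_of_irregular_singular_ODE {K : Type*} [Field K] [CharZero K]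
    (f h c : PowerSeries K)
    (hf0 : PowerSeries.coeff 0 f = 0) (hf1 : PowerSeries.coeff 1 f = 0)
    (hh : PowerSeries.constantCoeff h ≠ 0)
    (heq : f * (PowerSeries.derivative K c) = h * c) :
    c = 0 :=
  eq_zero_of_irregular_singular_ODE_general f h c hf0 hf1 hh heq
end

section
/- (Centralizer lemma for saddle-node germs, polynomial form.) Let f, g be real polynomials in one variable with f(0) = 0, f′(0) = 0, f ≠ 0, and g(0) ≠ 0. Let v be the planar polynomial vector field with components v₁(x,y) = f(x) and v₂(x,y) = y·g(x). Then a planar polynomial vector field w = (F, G), with F, G ∈ ℝ[x,y], satisfies [v, w] = 0 if and only if there exist real constants α and β such that F(x,y) = α·f(x) and G(x,y) = y·(α·g(x) + β); equivalently, w = α·v + β·(0, y), so the centralizer of v in the space of planar polynomial vector fields is the two-dimensional real span of v and the vector field (0, y). -/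
open MvPolynomial

/-- The Lie bracket of two planar polynomial vector fields
`v = (v₁, v₂)` and `w = (w₁, w₂)`, with components in `ℝ[x,y]`:
`[v,w]ᵢ = v₁·∂ₓwᵢ + v₂·∂_y wᵢ − w₁·∂ₓvᵢ − w₂·∂_y vᵢ`. -/
noncomputable def planarBracket
    (v w : MvPolynomial (Fin 2) ℝ × MvPolynomial (Fin 2) ℝ) :
    MvPolynomial (Fin 2) ℝ × MvPolynomial (Fin 2) ℝ :=
  (v.1 * pderiv 0 w.1 + v.2 * pderiv 1 w.1 - w.1 * pderiv 0 v.1 - w.2 * pderiv 1 v.1,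
   v.1 * pderiv 0 w.2 + v.2 * pderiv 1 w.2 - w.1 * pderiv 0 v.2 - w.2 * pderiv 1 v.2)

section Aux
open Polynomial


/-- ODE lemma B: if `f·p' = h·p` with `f` vanishing to order ≥ 2 at 0 and `h(0) ≠ 0`, then `p = 0`. -/
lemma saddle_ode_zero (f h p : ℝ[X]) (hf : f ≠ 0)
    (hf0 : f.coeff 0 = 0) (hf1 : f.coeff 1 = 0) (hh : h.coeff 0 ≠ 0)
    (heq : f * derivative p = h * p) : p = 0 := by
  by_contra hp
  have hhne : h ≠ 0 := fun h0 => hh (by simp [h0])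
  -- p(0) = 0
  have hp0 : p.coeff 0 = 0 := by
    have := congrArg (fun q => Polynomial.coeff q 0) heq
    simp only [mul_coeff_zero, hf0, zero_mul] at this
    exact (mul_eq_zero.mp this.symm).resolve_left hh
  -- p' ≠ 0
  have hp' : derivative p ≠ 0 := by
    intro h0
    apply hp
    rw [eq_C_of_natDegree_eq_zero (natDegree_eq_zero_of_derivative_eq_zero h0), hp0, map_zero]
  set m := p.natTrailingDegree with hm
  have hmpos : 1 ≤ m := by
    rcases Nat.eq_zero_or_pos m with h0 | h1
    · exact absurd (Polynomial.trailingCoeff_nonzero_iff_nonzero.mpr hp)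
        (by simp [Polynomial.trailingCoeff, ← hm, h0, hp0])
    · exact h1
  -- natTrailingDegree of the derivative is m - 1
  have hcoeffm : p.coeff m ≠ 0 := Polynomial.trailingCoeff_nonzero_iff_nonzero.mpr hp
  have hdm : (derivative p).natTrailingDegree = m - 1 := by
    apply le_antisymm
    · apply natTrailingDegree_le_of_ne_zero
      rw [coeff_derivative, Nat.sub_add_cancel hmpos]
      push_cast
      have : ((m : ℝ) - 1) + 1 ≠ 0 := by
        have : (1:ℝ) ≤ (m:ℝ) := by exact_mod_cast hmpos
        nlinarith
      intro hcontra
      rcases mul_eq_zero.mp hcontra with h1 | h2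
      · exact hcoeffm h1
      · exact this (by linarith [h2] )
    · apply le_natTrailingDegree hp'
      intro i hi
      rw [coeff_derivative]
      have : p.coeff (i+1) = 0 := coeff_eq_zero_of_lt_natTrailingDegree (by omega)
      simp [this]
  -- trailing degrees of both sides of heq
  have h2f : 2 ≤ f.natTrailingDegree := by
    apply le_natTrailingDegree hf
    intro i hi
    interval_cases i <;> assumption
  have hth : h.natTrailingDegree = 0 := Nat.le_zero.mp (natTrailingDegree_le_of_ne_zero hh)
  have hlhs := natTrailingDegree_mul (p := f) (q := derivative p) hf hp'
  have hrhs := natTrailingDegree_mul (p := h) (q := p) hhne hp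
  rw [heq, hrhs, hth, hdm] at hlhs
  omega


/-- ODE lemma A: over ℝ, `f·p' = f'·p` with `f ≠ 0` forces `p = α·f`. -/
lemma saddle_ode_prop (f : ℝ[X]) (hf : f ≠ 0) :
    ∀ p : ℝ[X], f * derivative p = derivative f * p → ∃ α : ℝ, p = Polynomial.C α * f := by
  have const_case : ∀ p : ℝ[X], derivative p = 0 →
      f * derivative p = derivative f * p → ∃ α : ℝ, p = Polynomial.C α * f := by
    intro p hd heq
    rw [hd, mul_zero] at heq
    rcases mul_eq_zero.mp heq.symm with hf' | hpz
    · have hfc : f = Polynomial.C (f.coeff 0) := eq_C_of_derivative_eq_zero hf'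
      have hpc : p = Polynomial.C (p.coeff 0) := eq_C_of_derivative_eq_zero hd
      have hd0 : f.coeff 0 ≠ 0 := fun h0 => hf (by rw [hfc, h0, map_zero])
      refine ⟨p.coeff 0 / f.coeff 0, ?_⟩
      nth_rewrite 1 [hpc]
      nth_rewrite 2 [hfc]
      rw [← map_mul, div_mul_cancel₀ _ hd0]
    · exact ⟨0, by rw [hpz, map_zero, zero_mul]⟩
  suffices H : ∀ n : ℕ, ∀ p : ℝ[X], p.natDegree ≤ n →
      f * derivative p = derivative f * p → ∃ α : ℝ, p = Polynomial.C α * f by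
    exact fun p h => H p.natDegree p le_rfl h
  intro n
  induction n with
  | zero =>
    intro p hdeg heq
    exact const_case p (by rw [eq_C_of_natDegree_eq_zero (Nat.le_zero.mp hdeg)]; simp) heq
  | succ n ih =>
    intro p hdeg heq
    by_cases hd : derivative p = 0
    · exact const_case p hd heq
    have hpne : p ≠ 0 := fun h0 => hd (by rw [h0, map_zero])
    have hf' : derivative f ≠ 0 := by
      intro h0
      rw [h0, zero_mul] at heq
      exact hd ((mul_eq_zero.mp heq).resolve_left hf)
    have hnp : 1 ≤ p.natDegree := by
      by_contra hcon
      exact hd (by rw [eq_C_of_natDegree_eq_zero (show p.natDegree = 0 by omega)]; simp)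
    have hnf : 1 ≤ f.natDegree := by
      by_contra hcon
      exact hf' (by rw [eq_C_of_natDegree_eq_zero (show f.natDegree = 0 by omega)]; simp)
    -- leading coefficients of derivatives
    have hlcp' : (derivative p).natDegree = p.natDegree - 1 ∧
        (derivative p).leadingCoeff = p.leadingCoeff * (p.natDegree : ℝ) := by
      have hco : (derivative p).coeff (p.natDegree - 1) = p.leadingCoeff * (p.natDegree : ℝ) := by
        rw [coeff_derivative, Nat.sub_add_cancel hnp, leadingCoeff]
        push_cast [Nat.sub_add_cancel hnp]
        ring_nf
        rw [Nat.cast_sub hnp]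
        ring
      have hne : (derivative p).coeff (p.natDegree - 1) ≠ 0 := by
        rw [hco]
        exact mul_ne_zero (leadingCoeff_ne_zero.mpr hpne) (by positivity)
      have h1 : (derivative p).natDegree = p.natDegree - 1 :=
        le_antisymm (natDegree_derivative_le p) (le_natDegree_of_ne_zero hne)
      exact ⟨h1, by rw [leadingCoeff, h1, hco]⟩
    have hlcf' : (derivative f).leadingCoeff = f.leadingCoeff * (f.natDegree : ℝ) := by
      have hco : (derivative f).coeff (f.natDegree - 1) = f.leadingCoeff * (f.natDegree : ℝ) := by
        rw [coeff_derivative, Nat.sub_add_cancel hnf, leadingCoeff]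
        push_cast [Nat.sub_add_cancel hnf]
        ring_nf
        rw [Nat.cast_sub hnf]
        ring
      have hne : (derivative f).coeff (f.natDegree - 1) ≠ 0 := by
        rw [hco]
        exact mul_ne_zero (leadingCoeff_ne_zero.mpr hf) (by positivity)
      have h1 : (derivative f).natDegree = f.natDegree - 1 :=
        le_antisymm (natDegree_derivative_le f) (le_natDegree_of_ne_zero hne)
      rw [leadingCoeff, h1, hco]
    -- degrees of f and p agree
    have hdeg_eq : p.natDegree = f.natDegree := by
      have := congrArg leadingCoeff heq
      rw [leadingCoeff_mul, leadingCoeff_mul, hlcp'.2, hlcf'] at this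
      have hlf : f.leadingCoeff ≠ 0 := leadingCoeff_ne_zero.mpr hf
      have hlp : p.leadingCoeff ≠ 0 := leadingCoeff_ne_zero.mpr hpne
      have h2 : p.leadingCoeff * (p.natDegree : ℝ) * f.leadingCoeff =
          p.leadingCoeff * (f.natDegree : ℝ) * f.leadingCoeff := by linear_combination this
      have h3 := mul_left_cancel₀ hlp (mul_right_cancel₀ hlf h2)
      exact_mod_cast h3
    set c : ℝ := p.leadingCoeff / f.leadingCoeff with hc
    have hlf : f.leadingCoeff ≠ 0 := leadingCoeff_ne_zero.mpr hf
    have hlp : p.leadingCoeff ≠ 0 := leadingCoeff_ne_zero.mpr hpne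
    have hcne : c ≠ 0 := div_ne_zero hlp hlf
    set q : ℝ[X] := p - Polynomial.C c * f with hq
    have hq_eq : f * derivative q = derivative f * q := by
      simp only [hq, derivative_sub, derivative_C_mul]
      linear_combination heq
    by_cases hq0 : q = 0
    · exact ⟨c, by rw [← sub_eq_zero]; exact hq ▸ hq0⟩
    · have hdegcf : (Polynomial.C c * f).degree = f.degree := by
        rw [degree_mul, degree_C hcne, zero_add]
      have hdlt : q.degree < p.degree := by
        apply degree_sub_lt _ hpne
        · rw [leadingCoeff_mul, leadingCoeff_C, hc, div_mul_cancel₀ _ hlf]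
        · rw [hdegcf, degree_eq_natDegree hpne, degree_eq_natDegree hf, hdeg_eq]
      have hqdeg : q.natDegree ≤ n := by
        have := natDegree_lt_natDegree hq0 hdlt
        omega
      obtain ⟨α, hα⟩ := ih q hqdeg hq_eq
      refine ⟨α + c, ?_⟩
      have : p = q + Polynomial.C c * f := by rw [hq]; ring
      rw [this, hα, map_add]
      ring

end Aux

section Aux2


/-- The isomorphism `ℝ[x,y] → (ℝ[x])[y]`, sending `X 0 ↦ C X` and `X 1 ↦ X`. -/
noncomputable def sdnPhi : MvPolynomial (Fin 2) ℝ →ₐ[ℝ] Polynomial (Polynomial ℝ) :=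
  MvPolynomial.aeval ![Polynomial.C Polynomial.X, Polynomial.X]

@[simp] lemma sdnPhi_X0 : sdnPhi (X 0) = Polynomial.C Polynomial.X := by
  simp [sdnPhi]

@[simp] lemma sdnPhi_X1 : sdnPhi (X 1) = Polynomial.X := by
  simp [sdnPhi]

@[simp] lemma sdnPhi_C (r : ℝ) : sdnPhi (C r) = Polynomial.C (Polynomial.C r) := by
  simp [sdnPhi, algebraMap_eq]

@[simp] lemma sdnPhi_aeval (a : Polynomial ℝ) :
    sdnPhi (Polynomial.aeval (X 0 : MvPolynomial (Fin 2) ℝ) a) = Polynomial.C a := by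
  have h : (sdnPhi.comp (Polynomial.aeval (X 0 : MvPolynomial (Fin 2) ℝ)) :
      Polynomial ℝ →ₐ[ℝ] Polynomial (Polynomial ℝ)) = Polynomial.CAlgHom := by
    apply Polynomial.algHom_ext
    simp [Polynomial.CAlgHom]
  exact congrFun (congrArg DFunLike.coe h) a

/-- `sdnPhi` is injective. -/
lemma sdnPhi_inj : Function.Injective sdnPhi := by
  let ψ : Polynomial (Polynomial ℝ) →+* MvPolynomial (Fin 2) ℝ :=
    Polynomial.eval₂RingHom (Polynomial.aeval (X 0 : MvPolynomial (Fin 2) ℝ)).toRingHom (X 1)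
  have hcomp : ψ.comp (sdnPhi : MvPolynomial (Fin 2) ℝ →+* Polynomial (Polynomial ℝ)) =
      RingHom.id _ := by
    apply MvPolynomial.ringHom_ext
    · intro r
      simp [ψ, sdnPhi, algebraMap_eq]
    · intro i
      fin_cases i <;> simp [ψ]
  intro a b hab
  have ha := RingHom.congr_fun hcomp a
  have hb := RingHom.congr_fun hcomp b
  simp only [RingHom.comp_apply, RingHom.coe_coe, RingHom.id_apply] at ha hb
  rw [← ha, ← hb, hab]

@[simp] lemma pderiv0_aeval (a : Polynomial ℝ) :
    pderiv 0 (Polynomial.aeval (X 0 : MvPolynomial (Fin 2) ℝ) a) =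
      Polynomial.aeval (X 0 : MvPolynomial (Fin 2) ℝ) (Polynomial.derivative a) := by
  induction a using Polynomial.induction_on' with
  | add p q hp hq => simp [hp, hq]
  | monomial n r =>
    rw [Polynomial.aeval_monomial, Polynomial.derivative_monomial, Polynomial.aeval_monomial,
      algebraMap_eq, pderiv_C_mul, pderiv_pow, pderiv_X_self, mul_one]
    cases n with
    | zero => simp
    | succ n =>
      simp only [Nat.add_sub_cancel, map_mul, map_natCast]
      push_cast
      ring

@[simp] lemma pderiv1_aeval (a : Polynomial ℝ) :
    pderiv 1 (Polynomial.aeval (X 0 : MvPolynomial (Fin 2) ℝ) a) = 0 := by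
  induction a using Polynomial.induction_on' with
  | add p q hp hq => simp [hp, hq]
  | monomial n r =>
    rw [Polynomial.aeval_monomial, algebraMap_eq, pderiv_C_mul, pderiv_pow,
      pderiv_X_of_ne (show (0:Fin 2) ≠ 1 by decide)]
    simp

lemma fin2_cases (i : Fin 2) : i = 0 ∨ i = 1 := by
  fin_cases i
  · exact Or.inl rfl
  · exact Or.inr rfl

lemma sdnPhi_pderiv1 (p : MvPolynomial (Fin 2) ℝ) :
    sdnPhi (pderiv 1 p) = Polynomial.derivative (sdnPhi p) := by
  induction p using MvPolynomial.induction_on with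
  | C r => simp
  | add p q hp hq => simp [hp, hq]
  | mul_X p i hp =>
    rw [pderiv_mul, map_add, map_mul, map_mul, hp, map_mul, Polynomial.derivative_mul]
    rcases fin2_cases i with hi | hi <;> subst hi
    · simp [pderiv_X_of_ne (show (0 : Fin 2) ≠ 1 by decide)]
    · simp

lemma sdnPhi_pderiv0_coeff (p : MvPolynomial (Fin 2) ℝ) (k : ℕ) :
    (sdnPhi (pderiv 0 p)).coeff k = Polynomial.derivative ((sdnPhi p).coeff k) := by
  induction p using MvPolynomial.induction_on generalizing k with
  | C r =>
    simp only [pderiv_C, map_zero, Polynomial.coeff_zero, sdnPhi_C, Polynomial.coeff_C]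
    split <;> simp
  | add p q hp hq => simp [hp, hq]
  | mul_X p i hp =>
    rw [pderiv_mul, map_add, map_mul, map_mul]
    rcases fin2_cases i with hi | hi <;> subst hi
    · simp only [pderiv_X_self, map_one, mul_one, sdnPhi_X0, map_mul, Polynomial.coeff_add,
        Polynomial.coeff_mul_C, hp]
      rw [Polynomial.derivative_mul]
      simp [Polynomial.coeff_mul_C, Polynomial.coeff_add, hp]
    · rw [pderiv_X_of_ne (show (1 : Fin 2) ≠ 0 by decide)]
      simp only [map_zero, mul_zero, add_zero, sdnPhi_X1, map_mul]
      cases k with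
      | zero => simp
      | succ k => simp [Polynomial.coeff_mul_X, hp]

lemma coeff_X_mul_derivative (P : Polynomial (Polynomial ℝ)) (k : ℕ) :
    (Polynomial.X * Polynomial.derivative P).coeff k = Polynomial.C (k : ℝ) * P.coeff k := by
  cases k with
  | zero => simp
  | succ k =>
    rw [Polynomial.coeff_X_mul, Polynomial.coeff_derivative]
    push_cast [Polynomial.C_add, Polynomial.C_1, Polynomial.C_eq_natCast]
    ring

lemma coeff_X_mul_C (a : Polynomial ℝ) (k : ℕ) :
    (Polynomial.X * Polynomial.C a).coeff k = if k = 1 then a else 0 := by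
  cases k with
  | zero => simp
  | succ k =>
    rw [Polynomial.coeff_X_mul, Polynomial.coeff_C]
    simp [Nat.succ_eq_add_one]

end Aux2

/-- Centralizer lemma for saddle-node germs (polynomial form).  Let `f, g ∈ ℝ[t]`
with `f(0) = 0`, `f′(0) = 0`, `f ≠ 0`, `g(0) ≠ 0`, and let
`v = (f(x), y·g(x))` be the saddle-node normal form.  A planar polynomial vector
field `w = (F, G)` commutes with `v` iff `F = α·f(x)` and `G = y·(α·g(x) + β)`
for some real constants `α, β`; i.e. the centralizer of `v` is spanned by `v`
and `(0, y)`. -/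
theorem centralizer_saddleNode (f g : Polynomial ℝ)
    (hf0 : f.eval 0 = 0) (hf1 : (Polynomial.derivative f).eval 0 = 0) (hf : f ≠ 0)
    (hg : g.eval 0 ≠ 0) (F G : MvPolynomial (Fin 2) ℝ) :
    planarBracket
      (Polynomial.aeval (X 0 : MvPolynomial (Fin 2) ℝ) f,
        X 1 * Polynomial.aeval (X 0 : MvPolynomial (Fin 2) ℝ) g)
      (F, G) = 0 ↔
    ∃ α β : ℝ,
      F = α • Polynomial.aeval (X 0 : MvPolynomial (Fin 2) ℝ) f ∧
      G = X 1 * (α • Polynomial.aeval (X 0 : MvPolynomial (Fin 2) ℝ) g + C β) := by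
  constructor
  · intro H
    have H1 := congrArg Prod.fst H
    have H2 := congrArg Prod.snd H
    simp only [planarBracket, Prod.fst_zero, Prod.snd_zero, pderiv0_aeval, pderiv1_aeval,
      mul_zero, sub_zero, pderiv_mul, pderiv_X_self, one_mul,
      pderiv_X_of_ne (show (1 : Fin 2) ≠ 0 by decide), zero_mul, zero_add, mul_zero,
      add_zero] at H1 H2
    -- push the first equation to (ℝ[x])[y]
    have K1 := congrArg sdnPhi H1
    simp only [map_add, map_sub, map_mul, map_zero, sdnPhi_aeval, sdnPhi_X1,
      sdnPhi_pderiv1] at K1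
    have K1' : Polynomial.C f * sdnPhi (pderiv 0 F) +
        Polynomial.C g * (Polynomial.X * Polynomial.derivative (sdnPhi F)) -
        sdnPhi F * Polynomial.C (Polynomial.derivative f) = 0 := by linear_combination K1
    have C1 : ∀ k : ℕ, f * Polynomial.derivative ((sdnPhi F).coeff k) +
        g * (Polynomial.C (k : ℝ) * (sdnPhi F).coeff k) -
        (sdnPhi F).coeff k * Polynomial.derivative f = 0 := by
      intro k
      have := congrArg (fun q => Polynomial.coeff q k) K1'
      simpa only [Polynomial.coeff_add, Polynomial.coeff_sub, Polynomial.coeff_zero,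
        Polynomial.coeff_C_mul, Polynomial.coeff_mul_C, sdnPhi_pderiv0_coeff,
        coeff_X_mul_derivative] using this
    -- basic coefficient facts
    have hfc0 : f.coeff 0 = 0 := by rwa [Polynomial.coeff_zero_eq_eval_zero]
    have hfc1 : f.coeff 1 = 0 := by
      have := hf1
      rw [← Polynomial.coeff_zero_eq_eval_zero, Polynomial.coeff_derivative] at this
      simpa using this
    have hdf0 : (Polynomial.derivative f).coeff 0 = 0 := by
      rw [Polynomial.coeff_derivative]; simpa using hfc1
    have hgc0 : g.coeff 0 ≠ 0 := by rwa [Polynomial.coeff_zero_eq_eval_zero]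
    -- k = 0 : F₀ = α f
    obtain ⟨α, hα⟩ : ∃ α : ℝ, (sdnPhi F).coeff 0 = Polynomial.C α * f := by
      apply saddle_ode_prop f hf
      have := C1 0
      simp only [Nat.cast_zero, map_zero, zero_mul, mul_zero, add_zero] at this
      linear_combination this
    -- k ≥ 1 : Fₖ = 0
    have hFk : ∀ k : ℕ, 1 ≤ k → (sdnPhi F).coeff k = 0 := by
      intro k hk
      apply saddle_ode_zero f
        (Polynomial.derivative f - Polynomial.C (k : ℝ) * g) _ hf hfc0 hfc1
      · rw [Polynomial.coeff_sub, Polynomial.coeff_C_mul, hdf0, zero_sub, neg_ne_zero]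
        exact mul_ne_zero (by positivity) hgc0
      · have := C1 k
        rw [sub_mul]
        linear_combination this
    have hPF : sdnPhi F = Polynomial.C (Polynomial.C α * f) := by
      rw [← hα]
      ext k
      cases k with
      | zero => simp
      | succ k =>
        rw [hFk (k + 1) (by omega), Polynomial.coeff_C]
        simp
    have hF : F = α • Polynomial.aeval (X 0 : MvPolynomial (Fin 2) ℝ) f := by
      apply sdnPhi_inj
      rw [map_smul, sdnPhi_aeval, hPF, ← Polynomial.smul_eq_C_mul, Polynomial.smul_C]
    -- second component
    have hF' : F = C α * Polynomial.aeval (X 0 : MvPolynomial (Fin 2) ℝ) f := by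
      rw [hF, smul_eq_C_mul]
    rw [hF'] at H2
    have K2 := congrArg sdnPhi H2
    simp only [map_add, map_sub, map_mul, map_zero, sdnPhi_aeval, sdnPhi_X1, sdnPhi_C,
      sdnPhi_pderiv1] at K2
    have K2' : Polynomial.C f * sdnPhi (pderiv 0 G) +
        Polynomial.C g * (Polynomial.X * Polynomial.derivative (sdnPhi G)) -
        Polynomial.X * Polynomial.C (Polynomial.C α * (f * Polynomial.derivative g)) -
        sdnPhi G * Polynomial.C g = 0 := by
      rw [map_mul, map_mul]
      linear_combination K2
    have C2 : ∀ k : ℕ, f * Polynomial.derivative ((sdnPhi G).coeff k) +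
        g * (Polynomial.C (k : ℝ) * (sdnPhi G).coeff k) -
        (Polynomial.X : Polynomial (Polynomial ℝ)).coeff k *
          (Polynomial.C α * (f * Polynomial.derivative g)) -
        (sdnPhi G).coeff k * g = 0 := by
      intro k
      have := congrArg (fun q => Polynomial.coeff q k) K2'
      simpa only [Polynomial.coeff_add, Polynomial.coeff_sub, Polynomial.coeff_zero,
        Polynomial.coeff_C_mul, Polynomial.coeff_mul_C,
        sdnPhi_pderiv0_coeff, coeff_X_mul_derivative] using this
    -- k = 0 : G₀ = 0
    have hG0 : (sdnPhi G).coeff 0 = 0 := by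
      apply saddle_ode_zero f g _ hf hfc0 hfc1 hgc0
      have := C2 0
      simp only [Nat.cast_zero, map_zero, zero_mul, mul_zero, add_zero,
        Polynomial.coeff_X_zero, sub_zero] at this
      linear_combination this
    -- k = 1 : G₁ = α g + β
    set β : ℝ := ((sdnPhi G).coeff 1 - Polynomial.C α * g).coeff 0 with hβ
    have hG1 : (sdnPhi G).coeff 1 = Polynomial.C α * g + Polynomial.C β := by
      have hder :
          Polynomial.derivative ((sdnPhi G).coeff 1 - Polynomial.C α * g) = 0 := by
        have h1 := C2 1
        simp only [Nat.cast_one, map_one, Polynomial.coeff_X_one, one_mul] at h1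
        have hf2 : f * Polynomial.derivative ((sdnPhi G).coeff 1 - Polynomial.C α * g)
            = 0 := by
          rw [Polynomial.derivative_sub, Polynomial.derivative_C_mul, mul_sub]
          linear_combination h1
        rcases mul_eq_zero.mp hf2 with h | h
        · exact absurd h hf
        · exact h
      have := Polynomial.eq_C_of_derivative_eq_zero hder
      rw [← hβ] at this
      linear_combination this
    -- k ≥ 2 : Gₖ = 0
    have hGk : ∀ k : ℕ, 2 ≤ k → (sdnPhi G).coeff k = 0 := by
      intro k hk
      apply saddle_ode_zero f (g - Polynomial.C (k : ℝ) * g) _ hf hfc0 hfc1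
      · rw [Polynomial.coeff_sub, Polynomial.coeff_C_mul, ← one_mul (g.coeff 0), ← mul_assoc,
          mul_one, ← sub_mul]
        apply mul_ne_zero _ hgc0
        have h2 : (2:ℝ) ≤ (k:ℝ) := by exact_mod_cast hk
        intro hcontra
        nlinarith
      · have := C2 k
        rw [Polynomial.coeff_X, if_neg (by omega : ¬1 = k)] at this
        simp only [zero_mul, sub_zero] at this
        rw [sub_mul]
        linear_combination this
    have hQG : sdnPhi G =
        Polynomial.X * Polynomial.C (Polynomial.C α * g + Polynomial.C β) := by
      refine Polynomial.ext fun k => ?_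
      rw [coeff_X_mul_C]
      match k with
      | 0 => simpa using hG0
      | 1 => simpa using hG1
      | (n+2) => simpa using hGk (n+2) (by omega)
    have hG : G = X 1 * (α • Polynomial.aeval (X 0 : MvPolynomial (Fin 2) ℝ) g + C β) := by
      apply sdnPhi_inj
      rw [map_mul, map_add, map_smul, sdnPhi_aeval, sdnPhi_X1, sdnPhi_C, hQG, map_add,
        ← Polynomial.smul_eq_C_mul, Polynomial.smul_C]
    exact ⟨α, β, hF, hG⟩
  · rintro ⟨α, β, rfl, rfl⟩
    have h10 : pderiv 0 (X 1 : MvPolynomial (Fin 2) ℝ) = 0 :=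
      pderiv_X_of_ne (show (1 : Fin 2) ≠ 0 by decide)
    simp only [planarBracket, smul_eq_C_mul, pderiv_mul, pderiv_C_mul, pderiv0_aeval,
      pderiv1_aeval, pderiv_X_self, pderiv_C, h10, mul_zero, zero_mul, add_zero, zero_add,
      mul_one, sub_zero, map_add, map_mul]
    rw [Prod.mk_eq_zero]
    constructor
    · ring
    · ring
end
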